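/- arXiv:2410.06615 — 3 statements merged into one kernel-verified Lean document; each statement's English description precedes it below -/
import Mathlib

section
/- Let b ≥ 2 be a natural number, α ∈ (0,1) a real number, and n_1, …, n_S natural numbers with n_s ≥ b for all s. Set N = ∑_{s=1}^S n_s, B_s = ⌊n_s/b⌋, and B = ∑_{s=1}^S B_s. Then for every s ∈ {1,…,S}: sqrt( log(2B/α) / (2(⌊n_s/B_s⌋ − 1)) ) ≤ sqrt( log(2N/(bα)) / (2(b−1)) ). -/
/-- Let `b ≥ 2` be a natural number, `α ∈ (0,1)`, and `n_1, …, n_S` natural numbers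
with `n_s ≥ b` for all `s`. Set `N = ∑ s, n s`, `B_s = ⌊n_s/b⌋`, `B = ∑ s, B_s`.
Then for every `s`,
`sqrt(log(2B/α) / (2(⌊n_s/B_s⌋ − 1))) ≤ sqrt(log(2N/(bα)) / (2(b−1)))`. -/
theorem stmt_8 (b : ℕ) (hb : 2 ≤ b) (α : ℝ) (hα : α ∈ Set.Ioo (0 : ℝ) 1)
    {S : ℕ} (n : Fin S → ℕ) (hn : ∀ s, b ≤ n s) :
    ∀ s : Fin S,
      Real.sqrt (Real.log (2 * ((∑ t, n t / b : ℕ) : ℝ) / α)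
          / (2 * (((n s / (n s / b) : ℕ) : ℝ) - 1)))
        ≤ Real.sqrt (Real.log (2 * ((∑ t, n t : ℕ) : ℝ) / ((b : ℝ) * α))
          / (2 * ((b : ℝ) - 1))) := by
  intro s
  obtain ⟨hα0, hα1⟩ := hα
  have hbpos : 0 < b := by omega
  -- B_s ≥ 1
  have hBs : 1 ≤ n s / b := (Nat.one_le_div_iff hbpos).2 (hn s)
  -- b ≤ n s / (n s / b)
  have hkey : b ≤ n s / (n s / b) := by
    rw [Nat.le_div_iff_mul_le (by omega)]
    calc b * (n s / b) = (n s / b) * b := mul_comm _ _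
    _ ≤ n s := Nat.div_mul_le_self _ _
  -- B ≥ 1
  have hB1 : 1 ≤ ∑ t, n t / b := le_trans hBs
    (Finset.single_le_sum (f := fun t => n t / b) (fun _ _ => Nat.zero_le _) (Finset.mem_univ s))
  -- B * b ≤ N
  have hBN : (∑ t, n t / b) * b ≤ ∑ t, n t := by
    rw [Finset.sum_mul]
    exact Finset.sum_le_sum (fun t _ => Nat.div_mul_le_self _ _)
  apply Real.sqrt_le_sqrt
  have hb1 : (1:ℝ) < b := by exact_mod_cast by omega
  have hnum : Real.log (2 * ((∑ t, n t / b : ℕ) : ℝ) / α)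
      ≤ Real.log (2 * ((∑ t, n t : ℕ) : ℝ) / ((b : ℝ) * α)) := by
    apply Real.log_le_log (by positivity)
    rw [div_le_div_iff₀ hα0 (by positivity)]
    have : ((∑ t, n t / b : ℕ) : ℝ) * b ≤ ((∑ t, n t : ℕ) : ℝ) := by exact_mod_cast hBN
    calc 2 * ((∑ t, n t / b : ℕ) : ℝ) * (↑b * α)
        = 2 * (((∑ t, n t / b : ℕ) : ℝ) * b) * α := by ring
      _ ≤ 2 * ((∑ t, n t : ℕ) : ℝ) * α := by nlinarith
  have hnum0 : 0 ≤ Real.log (2 * ((∑ t, n t / b : ℕ) : ℝ) / α) := by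
    apply Real.log_nonneg
    rw [le_div_iff₀ hα0]
    have : (1:ℝ) ≤ ((∑ t, n t / b : ℕ) : ℝ) := by exact_mod_cast hB1
    nlinarith
  have hden : 2 * ((b : ℝ) - 1) ≤ 2 * (((n s / (n s / b) : ℕ) : ℝ) - 1) := by
    have : (b : ℝ) ≤ ((n s / (n s / b) : ℕ) : ℝ) := by exact_mod_cast hkey
    linarith
  exact div_le_div₀ (hnum0.trans hnum) hnum (by linarith) hden
end

section
/- Let b ≥ 2 and N ≥ b be natural numbers, α ∈ (0,1), and ν ∈ [0,1]. Let S be a nonempty finite index set, and for each s ∈ S let B_s ≥ 1 be a number of bins with ∑_{s∈S} B_s ≤ N/b. For each s ∈ S and j ∈ {1,…,B_s}, let X_{s,j,1}, …, X_{s,j,m_{s,j}} be i.i.d. Bernoulli(μ̃_{s,j}) random variables with m_{s,j} ≥ b − 1, let Π̂_{s,j} be their empirical mean, and let μ_{s,j} ∈ [0,1] satisfy |μ̃_{s,j} − μ_{s,j}| ≤ ν. Then (without any independence assumption across distinct pairs (s,j)) with probability at least 1 − α, simultaneously for all s ∈ S and all j ∈ {1,…,B_s}: |Π̂_{s,j}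 − μ_{s,j}| ≤ sqrt( log(2N/(bα)) / (2(b−1)) ) + ν. -/
open MeasureTheory ProbabilityTheory

section QAaux
open Real

private lemma QA.pos_aux {p : ℝ} (hp : p ∈ Set.Icc (0:ℝ) 1) (t : ℝ) :
    0 < 1 - p + p * exp t := by
  obtain ⟨h0, h1⟩ := hp
  rcases le_or_gt 1 (exp t) with h | h
  · nlinarith
  · nlinarith [exp_pos t]

private lemma QA.hoeff_core {p : ℝ} (hp : p ∈ Set.Icc (0:ℝ) 1) (t : ℝ) :
    1 - p + p * exp t ≤ exp (p * t + t ^ 2 / 8) := by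
  obtain ⟨h0, h1⟩ := hp
  set v : ℝ → ℝ := fun t => 1 - p + p * exp t with hv
  set g : ℝ → ℝ := fun t => p * t + t ^ 2 / 8 - Real.log (v t) with hg
  set g' : ℝ → ℝ := fun t => p + t / 4 - p * exp t / v t with hg'
  have hvpos : ∀ t, 0 < v t := fun t => QA.pos_aux ⟨h0, h1⟩ t
  have hvd : ∀ t, HasDerivAt v (p * exp t) t := fun t => by
    exact ((Real.hasDerivAt_exp t).const_mul p).const_add (1 - p)
  have hgd : ∀ t, HasDerivAt g (g' t) t := by
    intro t
    have hlog : HasDerivAt (fun t => Real.log (v t)) (p * exp t / v t) t :=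
      (hvd t).log (hvpos t).ne'
    have h1' : HasDerivAt (fun t : ℝ => p * t + t ^ 2 / 8) (p + t / 4) t := by
      have := ((hasDerivAt_id t).const_mul p).add
        (((hasDerivAt_pow 2 t)).div_const 8)
      refine this.congr_deriv ?_
      rw [show (2:ℕ) - 1 = 1 from rfl]
      push_cast
      ring
    exact h1'.sub hlog
  have hg'd : ∀ t, HasDerivAt g' (1/4 - p * exp t * (1 - p) / (v t)^2) t := by
    intro t
    have hq : HasDerivAt (fun t => p * exp t / v t)
        ((p * exp t * v t - p * exp t * (p * exp t)) / (v t)^2) t :=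
      (((Real.hasDerivAt_exp t).const_mul p)).div (hvd t) (hvpos t).ne'
    have h1' : HasDerivAt (fun t : ℝ => p + t / 4) (1/4) t := by
      simpa using ((hasDerivAt_id t).div_const 4).const_add p
    have := h1'.sub hq
    refine this.congr_deriv ?_
    have : v t ≠ 0 := (hvpos t).ne'
    have hvt : v t = 1 - p + p * exp t := rfl
    congr 2
    rw [hvt]
    ring
  have hg''nonneg : ∀ t, 0 ≤ 1/4 - p * exp t * (1 - p) / (v t)^2 := by
    intro t
    have hv2 : (0:ℝ) < (v t)^2 := pow_pos (hvpos t) 2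
    rw [sub_nonneg, div_le_iff₀ hv2]
    have hvt : v t = (1 - p) + p * exp t := rfl
    rw [hvt]
    nlinarith [sq_nonneg ((1 - p) - p * exp t), exp_pos t]
  have hmono : Monotone g' := by
    apply monotone_of_deriv_nonneg
    · exact fun t => (hg'd t).differentiableAt
    · intro t
      rw [(hg'd t).deriv]
      exact hg''nonneg t
  have hg'0 : g' 0 = 0 := by simp [hg', hv]
  have hg0 : g 0 = 0 := by
    have : v 0 = 1 := by simp [hv]
    simp [hg, this]
  have key : 0 ≤ g t := by
    rcases le_or_gt 0 t with h | h
    · have : MonotoneOn g (Set.Ici (0:ℝ)) := by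
        apply monotoneOn_of_deriv_nonneg (convex_Ici 0)
          (Continuous.continuousOn (by
            exact continuous_iff_continuousAt.2 fun t => (hgd t).continuousAt))
          (fun t _ => (hgd t).differentiableAt.differentiableWithinAt)
        intro t ht
        rw [(hgd t).deriv]
        have : (0:ℝ) ≤ t := by
          simpa using interior_subset (s := Set.Ici (0:ℝ)) ht |>.out
        calc (0:ℝ) = g' 0 := hg'0.symm
          _ ≤ g' t := hmono this
      have := this (Set.self_mem_Ici) (Set.mem_Ici.2 h) h
      rwa [hg0] at this
    · have : AntitoneOn g (Set.Iic (0:ℝ)) := by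
        apply antitoneOn_of_deriv_nonpos (convex_Iic 0)
          (Continuous.continuousOn (by
            exact continuous_iff_continuousAt.2 fun t => (hgd t).continuousAt))
          (fun t _ => (hgd t).differentiableAt.differentiableWithinAt)
        intro t ht
        rw [(hgd t).deriv]
        have ht0 : t ≤ (0:ℝ) := by
          have := interior_subset (s := Set.Iic (0:ℝ)) ht
          exact this.out
        calc g' t ≤ g' 0 := hmono ht0
          _ = 0 := hg'0
      have := this (Set.mem_Iic.2 h.le) (Set.self_mem_Iic) h.le
      rwa [hg0] at this
  have : Real.log (v t) ≤ p * t + t ^ 2 / 8 := by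
    have := key
    simp only [hg, sub_nonneg] at this
    linarith
  calc v t = exp (Real.log (v t)) := (exp_log (hvpos t)).symm
    _ ≤ exp (p * t + t ^ 2 / 8) := exp_le_exp.2 this

variable {Ω : Type*} [MeasurableSpace Ω] (P : Measure Ω) [IsProbabilityMeasure P]

private lemma QA.mgf_bool {Y : Ω → ℝ} (hY : Measurable Y) (h01 : ∀ ω, Y ω = 0 ∨ Y ω = 1)
    {p : ℝ} (hp : 0 ≤ p) (hbp : P {ω | Y ω = 1} = ENNReal.ofReal p) (t : ℝ) :
    mgf Y P t = 1 - p + p * exp t := by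
  have hA : MeasurableSet {ω | Y ω = 1} := hY (measurableSet_singleton 1)
  have hfun : ∀ ω, exp (t * Y ω) =
      ({ω | Y ω = 1} : Set Ω).indicator (fun _ => exp t - 1) ω + 1 := by
    intro ω
    rcases h01 ω with h | h
    · have : ω ∉ ({ω | Y ω = 1} : Set Ω) := by simp [Set.mem_setOf_eq, h]
      simp [h, Set.indicator_of_notMem this]
    · have : ω ∈ ({ω | Y ω = 1} : Set Ω) := h
      simp [h, Set.indicator_of_mem this]
  have hPA : (P {ω | Y ω = 1}).toReal = p := by
    rw [hbp, ENNReal.toReal_ofReal hp]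
  rw [mgf]
  calc ∫ ω, exp (t * Y ω) ∂P
      = ∫ ω, (({ω | Y ω = 1} : Set Ω).indicator (fun _ => exp t - 1) ω + 1) ∂P :=
        integral_congr_ae (Filter.Eventually.of_forall hfun)
    _ = (∫ ω, ({ω | Y ω = 1} : Set Ω).indicator (fun _ => exp t - 1) ω ∂P) + ∫ _, (1:ℝ) ∂P := by
        apply integral_add
        · exact (integrable_indicator_iff hA).2 (integrableOn_const (measure_ne_top _ _))
        · exact integrable_const 1
    _ = (exp t - 1) * p + 1 := by
        rw [integral_indicator_const _ hA, integral_const]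
        simp [hPA, smul_eq_mul, mul_comm]
        rw [measureReal_def, hPA]
        ring
    _ = 1 - p + p * exp t := by ring

private lemma QA.chernoff_upper {n : ℕ} {Y : Fin n → Ω → ℝ}
    (hY : ∀ i, Measurable (Y i)) (hind : iIndepFun Y P)
    (h01 : ∀ i ω, Y i ω = 0 ∨ Y i ω = 1)
    {p : ℝ} (hp : p ∈ Set.Icc (0:ℝ) 1) (hbp : ∀ i, P {ω | Y i ω = 1} = ENNReal.ofReal p)
    {ε : ℝ} (hε : 0 ≤ ε) :
    P {ω | (n : ℝ) * p + n * ε ≤ ∑ i, Y i ω} ≤ ENNReal.ofReal (exp (-(2 * n * ε ^ 2))) := by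
  set t : ℝ := 4 * ε with ht
  have htnn : 0 ≤ t := by positivity
  have hint : ∀ i, Integrable (fun ω => exp (t * Y i ω)) P := by
    intro i
    apply Integrable.mono' (integrable_const (exp (t * 1)))
      (((hY i).const_mul t).exp.aestronglyMeasurable)
    filter_upwards with ω
    rw [Real.norm_eq_abs, abs_of_pos (exp_pos _), exp_le_exp]
    rcases h01 i ω with h | h <;> simp [h] <;> positivity
  have hintS : Integrable (fun ω => exp (t * (∑ i, Y i) ω)) P :=
    hind.integrable_exp_mul_sum hY (fun i _ => hint i)
  have hcher := measure_ge_le_exp_mul_mgf (μ := P) (X := (∑ i, Y i))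
    ((n : ℝ) * p + n * ε) htnn hintS
  have hmgf : mgf (∑ i, Y i) P t ≤ exp ((n:ℝ) * (p * t + t ^ 2 / 8)) := by
    rw [hind.mgf_sum hY]
    calc ∏ i : Fin n, mgf (Y i) P t = ∏ _i : Fin n, (1 - p + p * exp t) := by
          apply Finset.prod_congr rfl
          intro i _
          exact QA.mgf_bool P (hY i) (h01 i) hp.1 (hbp i) t
      _ = (1 - p + p * exp t) ^ n := by simp
      _ ≤ (exp (p * t + t ^ 2 / 8)) ^ n :=
          pow_le_pow_left₀ (le_of_lt (QA.pos_aux hp t)) (QA.hoeff_core hp t) n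
      _ = exp ((n:ℝ) * (p * t + t ^ 2 / 8)) := by
          rw [← Real.exp_nat_mul]
  have hreal : (P {ω | (n : ℝ) * p + n * ε ≤ ∑ i, Y i ω}).toReal ≤ exp (-(2 * n * ε ^ 2)) := by
    have hset : {ω | (n : ℝ) * p + n * ε ≤ ∑ i, Y i ω}
        = {ω | (n : ℝ) * p + n * ε ≤ (∑ i, Y i) ω} := by
      ext ω; simp [Finset.sum_apply]
    rw [hset]
    calc (P {ω | (n : ℝ) * p + n * ε ≤ (∑ i, Y i) ω}).toReal
        ≤ exp (-t * ((n : ℝ) * p + n * ε)) * mgf (∑ i, Y i) P t := hcher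
      _ ≤ exp (-t * ((n : ℝ) * p + n * ε)) * exp ((n:ℝ) * (p * t + t ^ 2 / 8)) :=
          mul_le_mul_of_nonneg_left hmgf (le_of_lt (exp_pos _))
      _ = exp (-(2 * n * ε ^ 2)) := by
          rw [← Real.exp_add]
          congr 1
          rw [ht]
          ring
  rw [ENNReal.le_ofReal_iff_toReal_le (measure_ne_top _ _) (le_of_lt (exp_pos _))]
  exact hreal

private lemma QA.bin_bound {n : ℕ} (hn : 1 ≤ n) {Y : Fin n → Ω → ℝ}
    (hY : ∀ i, Measurable (Y i)) (hind : iIndepFun Y P)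
    (h01 : ∀ i ω, Y i ω = 0 ∨ Y i ω = 1)
    {p : ℝ} (hp : p ∈ Set.Icc (0:ℝ) 1) (hbp : ∀ i, P {ω | Y i ω = 1} = ENNReal.ofReal p)
    {ε : ℝ} (hε : 0 ≤ ε) :
    P {ω | ε < |(1 / (n : ℝ)) * ∑ i, Y i ω - p|} ≤
      ENNReal.ofReal (2 * exp (-(2 * n * ε ^ 2))) := by
  have hnpos : (0:ℝ) < n := by exact_mod_cast hn
  set Z : Fin n → Ω → ℝ := fun i ω => 1 - Y i ω with hZ
  have hZmeas : ∀ i, Measurable (Z i) := fun i => (measurable_const.sub (hY i))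
  have hZind : iIndepFun Z P := by
    have := hind.comp (fun _ (x : ℝ) => 1 - x) (fun _ => measurable_const.sub measurable_id)
    exact this
  have hZ01 : ∀ i ω, Z i ω = 0 ∨ Z i ω = 1 := by
    intro i ω; rcases h01 i ω with h | h <;> simp [hZ, h]
  have hZp : (1 - p) ∈ Set.Icc (0:ℝ) 1 := ⟨by linarith [hp.2], by linarith [hp.1]⟩
  have hZb : ∀ i, P {ω | Z i ω = 1} = ENNReal.ofReal (1 - p) := by
    intro i
    have hset : {ω | Z i ω = 1} = {ω | Y i ω = 1}ᶜ := by
      ext ω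
      rcases h01 i ω with h | h <;> simp [hZ, h]
    have hAm : MeasurableSet {ω | Y i ω = 1} := hY i (measurableSet_singleton 1)
    rw [hset, prob_compl_eq_one_sub hAm, hbp i]
    rw [← ENNReal.ofReal_one, ← ENNReal.ofReal_sub _ hp.1]
  have hsub : {ω | ε < |(1 / (n : ℝ)) * ∑ i, Y i ω - p|} ⊆
      {ω | (n : ℝ) * p + n * ε ≤ ∑ i, Y i ω} ∪
      {ω | (n : ℝ) * (1 - p) + n * ε ≤ ∑ i, Z i ω} := by
    intro ω hω
    simp only [Set.mem_setOf_eq] at hω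
    have hZsum : ∑ i, Z i ω = (n : ℝ) - ∑ i, Y i ω := by
      simp [hZ, Finset.sum_sub_distrib]
    rcases lt_abs.mp hω with h | h
    · left
      show (n : ℝ) * p + n * ε ≤ ∑ i, Y i ω
      have : (n:ℝ) * ((1 / (n : ℝ)) * ∑ i, Y i ω) = ∑ i, Y i ω := by
        field_simp
      nlinarith
    · right
      show (n : ℝ) * (1 - p) + n * ε ≤ ∑ i, Z i ω
      rw [hZsum]
      have : (n:ℝ) * ((1 / (n : ℝ)) * ∑ i, Y i ω) = ∑ i, Y i ω := by
        field_simp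
      nlinarith
  calc P {ω | ε < |(1 / (n : ℝ)) * ∑ i, Y i ω - p|}
      ≤ P ({ω | (n : ℝ) * p + n * ε ≤ ∑ i, Y i ω} ∪
          {ω | (n : ℝ) * (1 - p) + n * ε ≤ ∑ i, Z i ω}) := measure_mono hsub
    _ ≤ P {ω | (n : ℝ) * p + n * ε ≤ ∑ i, Y i ω} +
        P {ω | (n : ℝ) * (1 - p) + n * ε ≤ ∑ i, Z i ω} := measure_union_le _ _
    _ ≤ ENNReal.ofReal (exp (-(2 * n * ε ^ 2))) + ENNReal.ofReal (exp (-(2 * n * ε ^ 2))) := by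
        gcongr
        · exact QA.chernoff_upper P hY hind h01 hp hbp hε
        · exact QA.chernoff_upper P hZmeas hZind hZ01 hZp hZb hε
    _ = ENNReal.ofReal (2 * exp (-(2 * n * ε ^ 2))) := by
        rw [← ENNReal.ofReal_add (le_of_lt (exp_pos _)) (le_of_lt (exp_pos _))]
        ring_nf

end QAaux

/-- Probabilistic core of the distribution-free QA-calibration guarantee:
with minimum bin size `b ≥ 2`, `N ≥ b` calibration points, partitions `s ∈ S`
with `B_s ≥ 1` bins each and `∑ s, B_s ≤ N/b`, and, for each bin `(s,j)`,
`m_{s,j} ≥ b−1` i.i.d. `Bernoulli(μ̃_{s,j})` samples (no independence across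
bins), empirical means `Π̂_{s,j}`, and true means `μ_{s,j} ∈ [0,1]` with
`|μ̃_{s,j} − μ_{s,j}| ≤ ν`, with probability at least `1 − α`, simultaneously
for all `s, j`: `|Π̂_{s,j} − μ_{s,j}| ≤ sqrt(log(2N/(bα))/(2(b−1))) + ν`. -/
theorem stmt_9 {Ω : Type*} [MeasurableSpace Ω] (P : Measure Ω) [IsProbabilityMeasure P]
    (b N : ℕ) (hb : 2 ≤ b) (hN : b ≤ N)
    (α ν : ℝ) (hα : α ∈ Set.Ioo (0 : ℝ) 1) (hν : ν ∈ Set.Icc (0 : ℝ) 1)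
    {S : Type*} [Fintype S] [Nonempty S]
    (Bs : S → ℕ) (hBs : ∀ s, 1 ≤ Bs s)
    (hBsum : (∑ s, (Bs s : ℝ)) ≤ (N : ℝ) / (b : ℝ))
    (m : (s : S) → Fin (Bs s) → ℕ) (hm : ∀ s j, b - 1 ≤ m s j)
    (X : (s : S) → (j : Fin (Bs s)) → Fin (m s j) → Ω → ℝ)
    (μt μ : (s : S) → Fin (Bs s) → ℝ)
    (hmeas : ∀ s j i, Measurable (X s j i))
    (hindep : ∀ s j, iIndepFun (X s j) P)
    (h01 : ∀ s j i ω, X s j i ω = 0 ∨ X s j i ω = 1)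
    (hbernoulli : ∀ s j i, P {ω | X s j i ω = 1} = ENNReal.ofReal (μt s j))
    (hμ : ∀ s j, μ s j ∈ Set.Icc (0 : ℝ) 1)
    (hmis : ∀ s j, |μt s j - μ s j| ≤ ν) :
    ENNReal.ofReal (1 - α) ≤
      P {ω | ∀ s j, |(1 / (m s j : ℝ)) * ∑ i, X s j i ω - μ s j|
        ≤ Real.sqrt (Real.log (2 * (N : ℝ) / ((b : ℝ) * α)) / (2 * ((b : ℝ) - 1))) + ν} := by
  classical
  obtain ⟨hα0, hα1⟩ := hα
  have hbR : (2:ℝ) ≤ (b:ℝ) := by exact_mod_cast hb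
  have hNR : (b:ℝ) ≤ (N:ℝ) := by exact_mod_cast hN
  have hbpos : (0:ℝ) < b := by linarith
  have hNpos : (0:ℝ) < N := by linarith
  set R : ℝ := 2 * (N : ℝ) / ((b : ℝ) * α) with hR
  have hR1 : 1 < R := by
    rw [hR, lt_div_iff₀ (by positivity)]
    nlinarith
  have hRpos : 0 < R := lt_trans one_pos hR1
  have hlogR : 0 < Real.log R := Real.log_pos hR1
  set ε : ℝ := Real.sqrt (Real.log R / (2 * ((b : ℝ) - 1))) with hε
  have hdenpos : 0 < 2 * ((b : ℝ) - 1) := by linarith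
  have hεnn : 0 ≤ ε := Real.sqrt_nonneg _
  have hεsq : ε ^ 2 = Real.log R / (2 * ((b : ℝ) - 1)) := by
    rw [hε, Real.sq_sqrt (by positivity)]
  -- true Bernoulli parameters, clipped at 0
  set pp : (s : S) → Fin (Bs s) → ℝ := fun s j => max (μt s j) 0 with hpp
  have hppIcc : ∀ s j, pp s j ∈ Set.Icc (0:ℝ) 1 := by
    intro s j
    refine ⟨le_max_right _ _, ?_⟩
    have hmpos : 0 < m s j := lt_of_lt_of_le (by omega) (hm s j)
    have hle1 : P {ω | X s j ⟨0, hmpos⟩ ω = 1} ≤ 1 := prob_le_one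
    rw [hbernoulli s j ⟨0, hmpos⟩] at hle1
    have : μt s j ≤ 1 := ENNReal.ofReal_le_one.mp hle1
    exact max_le this zero_le_one
  have hppb : ∀ s j i, P {ω | X s j i ω = 1} = ENNReal.ofReal (pp s j) := by
    intro s j i
    rw [hbernoulli s j i]
    rcases le_or_gt 0 (μt s j) with h | h
    · rw [hpp]; simp [max_eq_left_iff.mpr]
    · rw [hpp]
      simp only [max_eq_right h.le]
      rw [ENNReal.ofReal_of_nonpos h.le, ENNReal.ofReal_zero]
  have hppμ : ∀ s j, |pp s j - μ s j| ≤ ν := by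
    intro s j
    rcases le_or_gt 0 (μt s j) with h | h
    · rw [hpp]; simpa [max_eq_left h] using hmis s j
    · rw [hpp]
      simp only [max_eq_right h.le]
      have h1 := abs_le.mp (hmis s j)
      have h2 := (hμ s j).1
      rw [abs_le]
      constructor <;> linarith [h1.1, h1.2]
  -- bad events
  set bad : (s : S) → Fin (Bs s) → Set Ω :=
    fun s j => {ω | ε < |(1 / (m s j : ℝ)) * ∑ i, X s j i ω - pp s j|} with hbad
  have hbadmeas : ∀ s j, MeasurableSet (bad s j) := by
    intro s j
    apply measurableSet_lt measurable_const
    exact (((Finset.univ.measurable_sum (fun i _ => hmeas s j i)).const_mul _).sub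
      measurable_const).abs
  have hmn : ∀ s j, 1 ≤ m s j := fun s j => le_trans (by omega) (hm s j)
  have hmcast : ∀ s j, (b:ℝ) - 1 ≤ (m s j : ℝ) := by
    intro s j
    have := hm s j
    have h1 : ((b - 1 : ℕ) : ℝ) ≤ (m s j : ℝ) := by exact_mod_cast this
    rwa [Nat.cast_sub (by omega), Nat.cast_one] at h1
  -- per-bin bound
  have hbadbound : ∀ s j, P (bad s j) ≤ ENNReal.ofReal ((b:ℝ) * α / N) := by
    intro s j
    have h1 := QA.bin_bound P (hmn s j) (hmeas s j) (hindep s j) (h01 s j)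
      (hppIcc s j) (hppb s j) hεnn
    refine le_trans h1 (ENNReal.ofReal_le_ofReal ?_)
    have hexp : 2 * Real.exp (-(2 * (m s j : ℝ) * ε ^ 2)) ≤
        2 * Real.exp (-(2 * ((b:ℝ) - 1) * ε ^ 2)) := by
      have : 2 * ((b:ℝ) - 1) * ε ^ 2 ≤ 2 * (m s j : ℝ) * ε ^ 2 := by
        have := hmcast s j
        nlinarith [sq_nonneg ε]
      have := Real.exp_le_exp.mpr (neg_le_neg this)
      linarith
    refine le_trans hexp ?_
    have harg : -(2 * ((b:ℝ) - 1) * ε ^ 2) = -Real.log R := by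
      rw [hεsq]
      field_simp
      rw [div_self (show (0:ℝ) < (b:ℝ) - 1 by linarith).ne']
    rw [harg, Real.exp_neg, Real.exp_log hRpos, hR, inv_div]
    apply le_of_eq
    field_simp
  -- union bound
  set badU : Set Ω := ⋃ q : (Σ s, Fin (Bs s)), bad q.1 q.2 with hbadU
  have hbadUmeas : MeasurableSet badU :=
    MeasurableSet.iUnion (fun q => hbadmeas q.1 q.2)
  have hK : (Fintype.card ((s : S) × Fin (Bs s)) : ℝ) = ∑ s, (Bs s : ℝ) := by
    rw [Fintype.card_sigma]
    push_cast
    simp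
  have hUbound : P badU ≤ ENNReal.ofReal α := by
    calc P badU ≤ ∑' q : (Σ s, Fin (Bs s)), P (bad q.1 q.2) := measure_iUnion_le _
      _ = ∑ q : (Σ s, Fin (Bs s)), P (bad q.1 q.2) := tsum_fintype _
      _ ≤ ∑ _q : (Σ s, Fin (Bs s)), ENNReal.ofReal ((b:ℝ) * α / N) :=
          Finset.sum_le_sum (fun q _ => hbadbound q.1 q.2)
      _ = (Fintype.card ((s : S) × Fin (Bs s)) : ENNReal) * ENNReal.ofReal ((b:ℝ) * α / N) := by
          rw [Finset.sum_const, Finset.card_univ, nsmul_eq_mul]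
      _ = ENNReal.ofReal ((Fintype.card ((s : S) × Fin (Bs s)) : ℝ) * ((b:ℝ) * α / N)) := by
          rw [ENNReal.ofReal_mul (by positivity), ENNReal.ofReal_natCast]
      _ ≤ ENNReal.ofReal α := by
          apply ENNReal.ofReal_le_ofReal
          rw [hK]
          have hsum := hBsum
          have hstep : (∑ s, (Bs s : ℝ)) * ((b:ℝ) * α / N) ≤
              ((N:ℝ) / b) * ((b:ℝ) * α / N) := by
            apply mul_le_mul_of_nonneg_right hsum (by positivity)
          refine le_trans hstep (le_of_eq ?_)
          field_simp
  -- complement of union is inside the good event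
  have hgood : badUᶜ ⊆ {ω | ∀ (s : S) (j : Fin (Bs s)),
      |(1 / (m s j : ℝ)) * ∑ i, X s j i ω - μ s j| ≤ ε + ν} := by
    intro ω hω
    simp only [hbadU, Set.compl_iUnion, Set.mem_iInter] at hω
    intro s j
    have h1 : ¬ (ε < |(1 / (m s j : ℝ)) * ∑ i, X s j i ω - pp s j|) := hω ⟨s, j⟩
    push_neg at h1
    have h2 := hppμ s j
    have htri : |(1 / (m s j : ℝ)) * ∑ i, X s j i ω - μ s j| ≤
        |(1 / (m s j : ℝ)) * ∑ i, X s j i ω - pp s j| + |pp s j - μ s j| :=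
      abs_sub_le _ _ _
    have : |(1 / (m s j : ℝ)) * ∑ i, X s j i ω - μ s j| ≤ ε + ν := by linarith
    exact this
  calc ENNReal.ofReal (1 - α) ≤ 1 - ENNReal.ofReal α := by
        apply ENNReal.le_sub_of_add_le_right ENNReal.ofReal_ne_top
        rw [← ENNReal.ofReal_add (by linarith) (by linarith), ← ENNReal.ofReal_one]
        apply ENNReal.ofReal_le_ofReal
        linarith
    _ ≤ 1 - P badU := tsub_le_tsub_left hUbound 1
    _ = P badUᶜ := (prob_compl_eq_one_sub hbadUmeas).symm
    _ ≤ _ := measure_mono hgood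
end

section
/- Let (Ω, F, P) be a probability space, Y a bounded real random variable, H a real-valued random variable, and β a random variable with values in a measurable space. Then essSup |E[Y | σ(H)] − H| ≤ essSup |E[Y | σ(H) ⊔ σ(β)] − H|; that is, the maximum calibration error MCE = essSup |E[Y | σ(H)] − H| is at most the QA maximum calibration error MCE_β = essSup |E[Y | σ(H) ⊔ σ(β)] − H|. -/
open MeasureTheory Filter

/-- The maximum calibration error is at most the QA maximum calibration error:
`essSup |E[Y | σ(H)] − H| ≤ essSup |E[Y | σ(H) ⊔ σ(β)] − H|` for bounded `Y`. -/
theorem stmt_13 {Ω E : Type*} [MeasurableSpace Ω] [MeasurableSpace E]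
    (P : Measure Ω) [IsProbabilityMeasure P]
    (Y : Ω → ℝ) (C : ℝ) (hYbdd : ∀ ω, |Y ω| ≤ C)
    (H : Ω → ℝ) (hH : Measurable H) (β : Ω → E) (hβ : Measurable β) :
    essSup (fun ω => |(P[Y | MeasurableSpace.comap H inferInstance]) ω - H ω|) P
      ≤ essSup (fun ω => |(P[Y | MeasurableSpace.comap H inferInstance
          ⊔ MeasurableSpace.comap β inferInstance]) ω - H ω|) P := by
  have hm1 : MeasurableSpace.comap H inferInstance ≤ ‹MeasurableSpace Ω› := hH.comap_le
  have hm2 : MeasurableSpace.comap H inferInstance ⊔ MeasurableSpace.comap β inferInstance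
      ≤ ‹MeasurableSpace Ω› := sup_le hH.comap_le hβ.comap_le
  set m1 : MeasurableSpace Ω := MeasurableSpace.comap H inferInstance with hm1def
  set m2 : MeasurableSpace Ω := m1 ⊔ MeasurableSpace.comap β inferInstance with hm2def
  have hm12 : m1 ≤ m2 := le_sup_left
  by_cases hY : Integrable Y P
  swap
  · simp only [condExp_of_not_integrable hY]
    exact le_rfl
  -- notation
  set W : Ω → ℝ := P[Y | m1] with hWdef
  set Z : Ω → ℝ := P[Y | m2] with hZdef
  set f : Ω → ℝ := fun ω => |W ω - H ω| with hfdef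
  set g : Ω → ℝ := fun ω => |Z ω - H ω| with hgdef
  have hne : (ae P).NeBot := inferInstance
  -- C is nonneg
  obtain ⟨ω₀⟩ : Nonempty Ω := by
    rcases isEmpty_or_nonempty Ω with h | h
    · exfalso
      have h1 : P Set.univ = 1 := measure_univ
      rw [Set.univ_eq_empty_iff.2 h, measure_empty] at h1
      exact zero_ne_one h1
    · exact h
  have hC0 : 0 ≤ C := le_trans (abs_nonneg _) (hYbdd ω₀)
  have hYb : ∀ᵐ ω ∂P, |Y ω| ≤ (C.toNNReal : ℝ) := by
    filter_upwards with ω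
    rw [Real.coe_toNNReal _ hC0]
    exact hYbdd ω
  have hWb : ∀ᵐ ω ∂P, |W ω| ≤ C := by
    filter_upwards [ae_bdd_condExp_of_ae_bdd (m := m1) hYb] with ω h
    rwa [Real.coe_toNNReal _ hC0] at h
  have hZb : ∀ᵐ ω ∂P, |Z ω| ≤ C := by
    filter_upwards [ae_bdd_condExp_of_ae_bdd (m := m2) hYb] with ω h
    rwa [Real.coe_toNNReal _ hC0] at h
  -- key step: every a.e. bound of g is an a.e. bound of f
  have key : ∀ a : ℝ, (∀ᵐ ω ∂P, g ω ≤ a) → (∀ᵐ ω ∂P, f ω ≤ a) := by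
    intro a ha
    have ha0 : 0 ≤ a := by
      obtain ⟨ω, hω⟩ := ha.exists
      exact le_trans (abs_nonneg _) hω
    -- H is a.e. bounded hence integrable
    have hHint : Integrable H P := by
      refine ⟨hH.aestronglyMeasurable, HasFiniteIntegral.of_bounded (C := C + a) ?_⟩
      filter_upwards [ha, hZb] with ω h1 h2
      have : |H ω| ≤ |Z ω| + |Z ω - H ω| := by
        have := abs_sub_abs_le_abs_sub (Z ω) (H ω)
        have h3 := abs_sub (Z ω) (H ω)
        calc |H ω| = |Z ω - (Z ω - H ω)| := by ring_nf
          _ ≤ |Z ω| + |Z ω - H ω| := abs_sub _ _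
      calc ‖H ω‖ = |H ω| := rfl
        _ ≤ |Z ω| + |Z ω - H ω| := this
        _ ≤ C + a := add_le_add h2 h1
    have hZint : Integrable Z P := integrable_condExp
    -- conditional expectation manipulations
    have hsub : P[Z - H | m1] =ᵐ[P] P[Z | m1] - P[H | m1] := condExp_sub hZint hHint m1
    have hZ1 : P[Z | m1] =ᵐ[P] W := condExp_condExp_of_le hm12 hm2
    have hHsm : StronglyMeasurable[m1] H :=
      (Measurable.stronglyMeasurable (measurable_iff_comap_le.2 le_rfl))
    have hHm : P[H | m1] = H := condExp_of_stronglyMeasurable (μ := P) hm1 hHsm hHint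
    have hgb : ∀ᵐ ω ∂P, |(Z - H) ω| ≤ (a.toNNReal : ℝ) := by
      filter_upwards [ha] with ω h
      rw [Real.coe_toNNReal _ ha0]
      exact h
    have hbd := ae_bdd_condExp_of_ae_bdd (m := m1) hgb
    filter_upwards [hsub, hZ1, hbd] with ω h1 h2 h3
    have : (P[Z - H | m1]) ω = W ω - H ω := by
      rw [h1, Pi.sub_apply, h2, hHm]
    rw [Real.coe_toNNReal _ ha0] at h3
    calc f ω = |W ω - H ω| := rfl
      _ = |(P[Z - H | m1]) ω| := by rw [this]
      _ ≤ a := h3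
  -- essential sups as infima of a.e. bounds
  have hef : essSup f P = sInf {a : ℝ | ∀ᵐ ω ∂P, f ω ≤ a} := limsup_eq
  have heg : essSup g P = sInf {a : ℝ | ∀ᵐ ω ∂P, g ω ≤ a} := limsup_eq
  by_cases hbdd : ∃ a : ℝ, ∀ᵐ ω ∂P, g ω ≤ a
  · -- bounded case
    rw [heg]
    have hcob : IsCoboundedUnder (· ≤ ·) (ae P) f :=
      isCoboundedUnder_le_of_eventually_le (ae P) (x := 0)
        (Eventually.of_forall fun ω => abs_nonneg _)
    exact le_csInf hbdd fun a ha => limsup_le_of_le hcob (key a ha)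
  · -- unbounded case: both sets of a.e. bounds are empty, both essSups are `sInf ∅ = 0`
    have hge : {a : ℝ | ∀ᵐ ω ∂P, g ω ≤ a} = ∅ := by
      rw [Set.eq_empty_iff_forall_notMem]
      exact fun a ha => hbdd ⟨a, ha⟩
    have hfe : {a : ℝ | ∀ᵐ ω ∂P, f ω ≤ a} = ∅ := by
      rw [Set.eq_empty_iff_forall_notMem]
      intro a ha
      refine hbdd ⟨2 * C + a, ?_⟩
      filter_upwards [ha, hWb, hZb] with ω h1 h2 h3
      calc g ω = |Z ω - H ω| := rfl
        _ = |(Z ω - W ω) + (W ω - H ω)| := by ring_nf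
        _ ≤ |Z ω - W ω| + |W ω - H ω| := abs_add_le _ _
        _ ≤ (|Z ω| + |W ω|) + f ω := add_le_add (abs_sub _ _) le_rfl
        _ ≤ (C + C) + a := add_le_add (add_le_add h3 h2) h1
        _ = 2 * C + a := by ring
    rw [hef, heg, hge, hfe]
end
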